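/- arXiv:1603.02204 — 2 statements merged into one kernel-verified Lean document; each statement's English description precedes it below -/
import Mathlib

section
/- Let 𝓡 = 𝓡(ℝ,𝔽) with 𝔽 an algebraically closed field, and let A, B ∈ 𝓡̄^{n×n} be ELT matrices with A ⊨ B entrywise. Then det A ⊨ det B. -/
/-- The ELT algebra `𝓡(F, L)` together with an adjoined `−∞` element:
`bot` represents `−∞`, and `elt a ℓ` represents the element `[ℓ]a`
with tangible value `a ∈ F` and layer `ℓ ∈ L`.  Thus `ELT F L` plays the
role of `𝓡̄ = 𝓡 ∪ {−∞}`. -/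
inductive ELT (F : Type) (L : Type) : Type
  | bot : ELT F L
  | elt : F → L → ELT F L

namespace ELT

variable {F : Type} {L : Type}

/-- The sorting map `s : 𝓡̄ → L`, with `s (−∞) = 0`. -/
def s [Zero L] : ELT F L → L
  | bot => 0
  | elt _ ℓ => ℓ

/-- The tangible value `t : 𝓡̄ → F ∪ {−∞}`, with `t (−∞) = −∞ = ⊥`. -/
def t : ELT F L → WithBot F
  | bot => ⊥
  | elt a _ => (a : WithBot F)

/-- `−∞` is the additive identity of `𝓡̄`, so we register it as the zero. -/
instance : Zero (ELT F L) := ⟨bot⟩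

/-- The multiplicative identity `[1]0`. -/
instance [Zero F] [One L] : One (ELT F L) := ⟨elt 0 1⟩

/-- Addition on `𝓡̄`: the element with larger tangible value wins, and layers
add in case of a tie; `−∞` is neutral. -/
instance [LinearOrder F] [Add L] : Add (ELT F L) where
  add x y :=
    match x, y with
    | bot, y => y
    | x, bot => x
    | elt a ℓ, elt b k => if a < b then elt b k else if b < a then elt a ℓ else elt a (ℓ + k)

/-- Multiplication on `𝓡̄`: tangible values add, layers multiply; `−∞` is absorbing. -/
instance [Add F] [Mul L] : Mul (ELT F L) where
  mul x y :=
    match x, y with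
    | bot, _ => bot
    | _, bot => bot
    | elt a ℓ, elt b k => elt (a + b) (ℓ * k)

/-- The surpassing relation `x ⊨ y` on `𝓡̄`: `x = y + z` for some zero-layered `z`. -/
def Surpass [LinearOrder F] [Add L] [Zero L] (x y : ELT F L) : Prop :=
  ∃ z : ELT F L, s z = 0 ∧ x = y + z

/-- `x ∈ 𝓡^× ∪ {−∞}`: either `x = −∞` or `x` has nonzero layer. -/
def TangibleOrBot [Zero L] (x : ELT F L) : Prop :=
  x = bot ∨ s x ≠ 0

/-- The sum of a finite family of elements of `𝓡̄`. -/
def fsum [LinearOrder F] [Add L] {m : ℕ} (f : Fin m → ELT F L) : ELT F L :=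
  (List.ofFn f).sum

/-- A finite family of vectors in `𝓡̄ⁿ` is linearly dependent if there are
coefficients in `𝓡^× ∪ {−∞}`, not all `−∞`, such that the corresponding linear
combination is zero-layered in every coordinate (equivalently, some subfamily
admits a combination with all coefficients in `𝓡^×` which is zero-layered
everywhere). -/
def LinDep [LinearOrder F] [Zero L] [Add L] [Add F] [Mul L] {m n : ℕ}
    (v : Fin m → Fin n → ELT F L) : Prop :=
  ∃ a : Fin m → ELT F L, (∀ i, TangibleOrBot (a i)) ∧ (∃ i, a i ≠ bot) ∧
    ∀ j : Fin n, s (fsum fun i => a i * v i j) = 0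

/-- The ELT determinant of a square ELT matrix. -/
noncomputable def det {n : ℕ} [LinearOrder F] [Add F] [Zero F] [Ring L]
    (A : Matrix (Fin n) (Fin n) (ELT F L)) : ELT F L :=
  ((Finset.univ : Finset (Equiv.Perm (Fin n))).toList.map fun σ =>
    elt 0 (((Equiv.Perm.sign σ : ℤˣ) : ℤ) : L) * (List.ofFn fun i => A i (σ i)).prod).sum

/-- The EL tropicalization of a Hahn (generalized Puiseux) series: `0 ↦ −∞`,
and a nonzero series with leading monomial `ℓ tᵃ` goes to `[ℓ](−a)`. -/
noncomputable def ELTrop [AddCommGroup F] [LinearOrder F] [IsOrderedAddMonoid F] [Zero L] (x : HahnSeries F L) : ELT F L :=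
  open scoped Classical in
  if x = 0 then bot else elt (-x.order) (x.coeff x.order)

end ELT

/-! 𝓡̄ is a commutative semiring in which the zero-layered elements form an ideal, so
`x ⊨ y`, which says that `x` lies in `y` plus that ideal, is preserved by sums and products.
The determinant is a sum of products of entries with the fixed coefficients `[±1]0`,
hence it preserves `⊨` as well. -/

namespace ELT

variable {F L : Type}

section Order

variable [LinearOrder F]

@[simp] lemma bot_add [Add L] (x : ELT F L) : bot + x = x := by cases x <;> rfl

@[simp] lemma add_bot [Add L] (x : ELT F L) : x + bot = x := by cases x <;> rfl

lemma elt_add_elt [Add L] (a b : F) (ℓ k : L) :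
    elt a ℓ + elt b k = if a < b then elt b k else if b < a then elt a ℓ else elt a (ℓ + k) :=
  rfl

protected lemma add_comm [AddCommMagma L] (x y : ELT F L) : x + y = y + x := by
  cases x <;> cases y <;> try simp only [bot_add, add_bot]
  rename_i a ℓ b k
  rcases lt_trichotomy a b with h | rfl | h
  · simp [elt_add_elt, h, h.not_gt]
  · simp [elt_add_elt, add_comm]
  · simp [elt_add_elt, h, h.not_gt]

protected lemma add_assoc [AddSemigroup L] (x y z : ELT F L) : x + y + z = x + (y + z) := by
  cases x <;> cases y <;> cases z <;> try simp only [bot_add, add_bot]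
  rename_i a ℓ b k c m
  simp only [elt_add_elt]
  split_ifs <;> simp only [elt_add_elt] <;> split_ifs <;>
    first | rfl | (exfalso; order) | (congr 1; exact add_assoc _ _ _)

instance [AddCommMonoid L] : AddCommMonoid (ELT F L) where
  add_assoc := ELT.add_assoc
  zero_add := bot_add
  add_zero := add_bot
  add_comm := ELT.add_comm
  nsmul := nsmulRec

lemma s_add_eq_zero [AddZeroClass L] {x y : ELT F L} (hx : s x = 0) (hy : s y = 0) :
    s (x + y) = 0 := by
  cases x <;> cases y <;> try simp only [bot_add, add_bot, hx, hy]
  simp only [s] at hx hy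
  simp only [elt_add_elt]
  split_ifs <;> simp [s, hx, hy]

end Order

section Mul

variable [Add F] [Mul L]

@[simp] lemma bot_mul (x : ELT F L) : bot * x = bot := by cases x <;> rfl

@[simp] lemma mul_bot (x : ELT F L) : x * bot = bot := by cases x <;> rfl

@[simp] lemma elt_mul_elt (a b : F) (ℓ k : L) : elt a ℓ * elt b k = elt (a + b) (ℓ * k) := rfl

end Mul

protected lemma mul_comm [AddCommMagma F] [CommMagma L] (x y : ELT F L) : x * y = y * x := by
  cases x <;> cases y <;> simp [add_comm, mul_comm]

protected lemma mul_assoc [AddSemigroup F] [Semigroup L] (x y z : ELT F L) :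
    x * y * z = x * (y * z) := by
  cases x <;> cases y <;> cases z <;> simp [add_assoc, mul_assoc]

lemma s_mul [Add F] [MulZeroClass L] (x y : ELT F L) : s (x * y) = s x * s y := by
  cases x <;> cases y <;> simp [s]

section Semiring

variable [AddCommMonoid F] [LinearOrder F] [IsOrderedCancelAddMonoid F] [CommSemiring L]

protected lemma mul_add (x y z : ELT F L) : x * (y + z) = x * y + x * z := by
  cases x <;> cases y <;> cases z <;> try simp only [bot_add, add_bot, bot_mul, mul_bot]
  rename_i a ℓ b k c m
  rcases lt_trichotomy b c with h | rfl | h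
  · simp [elt_add_elt, h]
  · simp [elt_add_elt, mul_add]
  · simp [elt_add_elt, h, h.not_gt]

instance : CommSemiring (ELT F L) where
  left_distrib := ELT.mul_add
  right_distrib x y z := by rw [ELT.mul_comm, ELT.mul_add, ELT.mul_comm x, ELT.mul_comm y]
  zero_mul := bot_mul
  mul_zero := mul_bot
  mul_assoc := ELT.mul_assoc
  one_mul x := by cases x <;> simp [show (1 : ELT F L) = elt 0 1 from rfl]
  mul_one x := by cases x <;> simp [show (1 : ELT F L) = elt 0 1 from rfl]
  mul_comm := ELT.mul_comm

end Semiring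

section Surpass

variable [LinearOrder F]

lemma Surpass.refl [Add L] [Zero L] (x : ELT F L) : Surpass x x :=
  ⟨bot, rfl, (add_bot x).symm⟩

lemma Surpass.add [AddCommMonoid L] {x y x' y' : ELT F L} (h : Surpass x y)
    (h' : Surpass x' y') : Surpass (x + x') (y + y') := by
  obtain ⟨z, hz, rfl⟩ := h
  obtain ⟨z', hz', rfl⟩ := h'
  exact ⟨z + z', s_add_eq_zero hz hz', add_add_add_comm y z y' z'⟩

lemma Surpass.list_sum [AddCommMonoid L] {l l' : List (ELT F L)}
    (h : List.Forall₂ Surpass l l') : Surpass l.sum l'.sum :=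
  List.rel_sum (Surpass.refl 0) (fun _ _ hx _ _ hy => hx.add hy) h

variable [AddCommMonoid F] [IsOrderedCancelAddMonoid F]

lemma Surpass.mul [CommSemiring L] {x y x' y' : ELT F L} (h : Surpass x y)
    (h' : Surpass x' y') : Surpass (x * x') (y * y') := by
  obtain ⟨z, hz, rfl⟩ := h
  obtain ⟨z', hz', rfl⟩ := h'
  refine ⟨y * z' + z * y' + z * z', ?_, by ring⟩
  simp only [s_add_eq_zero, s_mul, hz, hz', mul_zero, zero_mul]

lemma Surpass.list_prod [CommSemiring L] {l l' : List (ELT F L)}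
    (h : List.Forall₂ Surpass l l') : Surpass l.prod l'.prod :=
  List.rel_prod (Surpass.refl 1) (fun _ _ hx _ _ hy => hx.mul hy) h

theorem Surpass.det [CommRing L] {n : ℕ} {A B : Matrix (Fin n) (Fin n) (ELT F L)}
    (h : ∀ i j, Surpass (A i j) (B i j)) : Surpass (det A) (det B) := by
  refine Surpass.list_sum ?_
  simp only [List.forall₂_map_left_iff, List.forall₂_map_right_iff, List.forall₂_same]
  refine fun σ _ => (Surpass.refl _).mul (Surpass.list_prod ?_)
  simp [List.ofFn_eq_map, List.forall₂_map_left_iff, List.forall₂_map_right_iff,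
    List.forall₂_same, h]

end Surpass

end ELT

theorem stmt3_general {𝔽 : Type} [Field 𝔽] {n : ℕ}
    (A B : Matrix (Fin n) (Fin n) (ELT ℝ 𝔽))
    (h : ∀ i j, ELT.Surpass (A i j) (B i j)) :
    ELT.Surpass (ELT.det A) (ELT.det B) :=
  ELT.Surpass.det h

/-- If `A ⊨ B` entrywise, then `det A ⊨ det B`. -/
theorem stmt3 {𝔽 : Type} [Field 𝔽] [IsAlgClosed 𝔽] {n : ℕ}
    (A B : Matrix (Fin n) (Fin n) (ELT ℝ 𝔽))
    (h : ∀ i j, ELT.Surpass (A i j) (B i j)) :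
    ELT.Surpass (ELT.det A) (ELT.det B) :=
  stmt3_general A B h
end

section
/- Let 𝓡 = 𝓡(ℝ,ℂ) and let ⟨·,·⟩ be an ELT inner product on 𝓡̄ⁿ. If u₁, u₂, v₁, v₂ ∈ 𝓡̄ⁿ satisfy t(u₁) = t(u₂) and t(v₁) = t(v₂) entrywise, then t(⟨u₁,v₁⟩) = t(⟨u₂,v₂⟩). -/
namespace ELT

/-- The ELT conjugate on `𝓡(ℝ,ℂ) ∪ {−∞}`. -/
def econj : ELT ℝ ℂ → ELT ℝ ℂ
  | bot => bot
  | elt a ℓ => elt a (starRingEnd ℂ ℓ)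

end ELT

/-- An ELT inner product on `𝓡̄ⁿ` over `𝓡 = 𝓡(ℝ,ℂ)`. -/
structure ELTInnerProduct (n : ℕ) where
  /-- the underlying pairing -/
  inner : (Fin n → ELT ℝ ℂ) → (Fin n → ELT ℝ ℂ) → ELT ℝ ℂ
  /-- linearity in the first argument: `⟨av + bu, w⟩ = a⟨v,w⟩ + b⟨u,w⟩` -/
  linear : ∀ (a b : ELT ℝ ℂ) (v u w : Fin n → ELT ℝ ℂ),
    inner (fun i => a * v i + b * u i) w = a * inner v w + b * inner u w
  /-- conjugate symmetry -/
  conj_symm : ∀ u v : Fin n → ELT ℝ ℂ, inner v u = ELT.econj (inner u v)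
  /-- `s(⟨v,v⟩)` is a nonnegative real number -/
  layer_nonneg : ∀ v : Fin n → ELT ℝ ℂ,
    0 ≤ (ELT.s (inner v v)).re ∧ (ELT.s (inner v v)).im = 0
  /-- for `v` with entries in `𝓡^× ∪ {−∞}`, `s(⟨v,v⟩) = 0` iff `v = (−∞,…,−∞)` -/
  definite : ∀ v : Fin n → ELT ℝ ℂ, (∀ i, ELT.TangibleOrBot (v i)) →
    (ELT.s (inner v v) = 0 ↔ v = fun _ => ELT.bot)

/-!
Adding `[-1]0 · x` to `x` kills its layer without changing its tangible value, so
`x + [-1]0 · x` depends only on `t x`. By linearity in the first argument,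
`⟨u, v⟩ + [-1]0 · ⟨u, v⟩ = ⟨u + [-1]0 · u, v⟩`, hence `t ⟨u, v⟩` depends only on the
tangible values of `u`. Conjugation preserves tangible values, so conjugate symmetry
transfers this to the second argument.
-/

namespace ELT

variable {F L : Type}

def ghost [Zero L] : ELT F L → ELT F L
  | bot => bot
  | elt a _ => elt a 0

lemma t_ghost [Zero L] (x : ELT F L) : t (ghost x) = t x := by
  cases x <;> rfl

lemma ghost_eq_ghost_of_t_eq [Zero L] {x y : ELT F L} (h : t x = t y) :
    ghost x = ghost y := by
  cases x <;> cases y <;> simp_all [t, ghost]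

lemma mul_add_neg_mul_eq_ghost [LinearOrder F] [AddZeroClass F] [Ring L] (x : ELT F L) :
    elt 0 1 * x + elt 0 (-1) * x = ghost x := by
  cases x with
  | bot => rfl
  | elt a ℓ =>
    change ite _ _ (ite _ _ (elt (0 + a) (1 * ℓ + -1 * ℓ))) = _
    simp [ghost]

lemma t_econj (x : ELT ℝ ℂ) : t (econj x) = t x := by
  cases x <;> rfl

end ELT

namespace ELTInnerProduct

variable {n : ℕ} (P : ELTInnerProduct n)

lemma t_inner_ghost_left (u v : Fin n → ELT ℝ ℂ) :
    ELT.t (P.inner (fun i => ELT.ghost (u i)) v) = ELT.t (P.inner u v) := by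
  have h := P.linear (ELT.elt 0 1) (ELT.elt 0 (-1)) u u v
  simp only [ELT.mul_add_neg_mul_eq_ghost] at h
  rw [h, ELT.t_ghost]

lemma t_inner_comm (u v : Fin n → ELT ℝ ℂ) :
    ELT.t (P.inner u v) = ELT.t (P.inner v u) := by
  rw [P.conj_symm v u, ELT.t_econj]

lemma t_inner_congr_left {u₁ u₂ : Fin n → ELT ℝ ℂ} (hu : ∀ i, ELT.t (u₁ i) = ELT.t (u₂ i))
    (v : Fin n → ELT ℝ ℂ) :
    ELT.t (P.inner u₁ v) = ELT.t (P.inner u₂ v) := by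
  have hg : (fun i => ELT.ghost (u₁ i)) = fun i => ELT.ghost (u₂ i) :=
    funext fun i => ELT.ghost_eq_ghost_of_t_eq (hu i)
  rw [← P.t_inner_ghost_left u₁, ← P.t_inner_ghost_left u₂, hg]

end ELTInnerProduct

/-- The tangible value of an ELT inner product only depends on the tangible
values of its arguments. -/
theorem stmt14 {n : ℕ} (P : ELTInnerProduct n) (u₁ u₂ v₁ v₂ : Fin n → ELT ℝ ℂ)
    (hu : ∀ i, ELT.t (u₁ i) = ELT.t (u₂ i))
    (hv : ∀ i, ELT.t (v₁ i) = ELT.t (v₂ i)) :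
    ELT.t (P.inner u₁ v₁) = ELT.t (P.inner u₂ v₂) := by
  calc ELT.t (P.inner u₁ v₁) = ELT.t (P.inner u₂ v₁) := P.t_inner_congr_left hu v₁
    _ = ELT.t (P.inner v₁ u₂) := P.t_inner_comm u₂ v₁
    _ = ELT.t (P.inner v₂ u₂) := P.t_inner_congr_left hv u₂
    _ = ELT.t (P.inner u₂ v₂) := P.t_inner_comm v₂ u₂
end
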